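/- arXiv:2306.16613 — 2 statements merged into one kernel-verified Lean document; each statement's English description precedes it below -/
import Mathlib

section
/- Let L ⊣ R be an adjoint pair of endofunctors of a category C, with (L, Δ, ϵ) a comonad structure on L and (R, μ, ι) the corresponding monad structure on R obtained by taking mates (μ is the mate of Δ, ι is the mate of ϵ). Then the cofree coalgebra functor F^L : C ⥤ C^L (x ↦ (L(x), Δ_x)) is heavily separable if and only if the free algebra functor F_R : C ⥤ C_R (x ↦ (R(x), μ_x)) is heavily separable. -/
open CategoryTheory

/-- A functor `F : C ⥤ D` is *heavily separable* if there is a natural transformation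
`P : Hom_D(F −, F −) ⟶ Hom_C(−, −)` of functors `Cᵒᵖ × C ⥤ Set` with `P (F.map f) = f`
which is compatible with composition. -/
def HeavilySeparable {C : Type*} [Category C] {D : Type*} [Category D] (F : C ⥤ D) : Prop :=
  ∃ P : ∀ a b : C, (F.obj a ⟶ F.obj b) → (a ⟶ b),
    (∀ (a' a b b' : C) (u : a' ⟶ a) (v : b ⟶ b') (h : F.obj a ⟶ F.obj b),
        P a' b' (F.map u ≫ h ≫ F.map v) = u ≫ P a b h ≫ v) ∧
    (∀ (a b : C) (f : a ⟶ b), P a b (F.map f) = f) ∧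
    (∀ (a b c : C) (f : F.obj a ⟶ F.obj b) (g : F.obj b ⟶ F.obj c),
        P a c (f ≫ g) = P a b f ≫ P b c g)

universe v u

/-!
The hom-sets of the cofree coalgebras and of the free algebras are both in natural bijection
with the hom-sets `L a ⟶ b ≃ a ⟶ R b` of the adjunction: coalgebra maps `L a ⟶ L b` correspond
to co-Kleisli maps `L a ⟶ b`, algebra maps `R a ⟶ R b` to Kleisli maps `a ⟶ R b`. Since `μ` is
the mate of `δ` and `η` the mate of `ε`, transposition along `L ⊣ R` turns co-Kleisli
composition into Kleisli composition and co-Kleisli identities into Kleisli identities. So the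
images of `F^L` and `F_R` are isomorphic over `C`, and a heavy separability datum `P` for one
functor is transported to the other by precomposition with this bijection.
-/

section Transfer

variable {C D D' : Type*} [Category C] [Category D] [Category D'] {F : C ⥤ D} {G : C ⥤ D'}

theorem HeavilySeparable.of_homMap (T : ∀ a b : C, (G.obj a ⟶ G.obj b) → (F.obj a ⟶ F.obj b))
    (map : ∀ (a b : C) (f : a ⟶ b), T a b (G.map f) = F.map f)
    (comp : ∀ (a b c : C) (g : G.obj a ⟶ G.obj b) (g' : G.obj b ⟶ G.obj c),
      T a c (g ≫ g') = T a b g ≫ T b c g') :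
    HeavilySeparable F → HeavilySeparable G := by
  rintro ⟨P, natural, map_eq, comp_eq⟩
  refine ⟨fun a b g => P a b (T a b g), ?_, ?_, ?_⟩
  · intro a' a b b' u v h
    simp only [comp, map, natural]
  · intro a b f
    simp only [map, map_eq]
  · intro a b c g g'
    simp only [comp, comp_eq]

theorem heavilySeparable_iff_of_homEquiv
    (E : ∀ a b : C, (F.obj a ⟶ F.obj b) ≃ (G.obj a ⟶ G.obj b))
    (map : ∀ (a b : C) (f : a ⟶ b), E a b (F.map f) = G.map f)
    (comp : ∀ (a b c : C) (f : F.obj a ⟶ F.obj b) (f' : F.obj b ⟶ F.obj c),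
      E a c (f ≫ f') = E a b f ≫ E b c f') :
    HeavilySeparable F ↔ HeavilySeparable G := by
  refine ⟨.of_homMap (fun a b => (E a b).symm) ?_ ?_, .of_homMap (fun a b => E a b) map comp⟩
  · intro a b f
    rw [Equiv.symm_apply_eq, map]
  · intro a b c g g'
    rw [Equiv.symm_apply_eq, comp, Equiv.apply_symm_apply, Equiv.apply_symm_apply]

end Transfer

namespace CategoryTheory

open Category

variable {C : Type*} [Category C]

namespace Comonad

variable (L : Comonad C)

def cofreeHomEquiv (a b : C) : (L.cofree.obj a ⟶ L.cofree.obj b) ≃ (L.obj a ⟶ b) :=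
  (L.adj.homEquiv _ _).symm

theorem cofreeHomEquiv_apply {a b : C} (f : L.cofree.obj a ⟶ L.cofree.obj b) :
    L.cofreeHomEquiv a b f = f.f ≫ L.ε.app b := by
  erw [cofreeHomEquiv, Adjunction.homEquiv_counit, adj_counit]
  rfl

theorem cofreeHomEquiv_symm_apply_f {a b : C} (k : L.obj a ⟶ b) :
    ((L.cofreeHomEquiv a b).symm k).f = L.δ.app a ≫ L.map k := by
  erw [cofreeHomEquiv, Equiv.symm_symm, Adjunction.homEquiv_unit, adj_unit]
  rfl

theorem cofreeHomEquiv_map {a b : C} (u : a ⟶ b) :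
    L.cofreeHomEquiv a b (L.cofree.map u) = L.ε.app a ≫ u := by
  rw [cofreeHomEquiv_apply]
  exact L.ε.naturality u

theorem cofreeHomEquiv_comp {a b c : C} (f : L.cofree.obj a ⟶ L.cofree.obj b)
    (g : L.cofree.obj b ⟶ L.cofree.obj c) :
    L.cofreeHomEquiv a c (f ≫ g) =
      L.δ.app a ≫ L.map (L.cofreeHomEquiv a b f) ≫ L.cofreeHomEquiv b c g := by
  have hf : f.f = L.δ.app a ≫ L.map (L.cofreeHomEquiv a b f) := by
    rw [← cofreeHomEquiv_symm_apply_f, Equiv.symm_apply_apply]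
  have hfg : L.cofreeHomEquiv a c (f ≫ g) = f.f ≫ L.cofreeHomEquiv b c g := by
    rw [cofreeHomEquiv_apply, cofreeHomEquiv_apply]
    -- not `rw [assoc]`: the carrier `(L.cofree.obj a).A` is `L.obj a` only up to unfolding
    exact Category.assoc _ _ _
  rw [hfg, hf]
  exact Category.assoc _ _ _

end Comonad

namespace Monad

variable (R : Monad C)

def freeHomEquiv (a b : C) : (R.free.obj a ⟶ R.free.obj b) ≃ (a ⟶ R.obj b) :=
  R.adj.homEquiv _ _

theorem freeHomEquiv_symm_apply_f {a b : C} (p : a ⟶ R.obj b) :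
    ((R.freeHomEquiv a b).symm p).f = R.map p ≫ R.μ.app b := by
  erw [freeHomEquiv, Adjunction.homEquiv_counit, adj_counit]
  rfl

theorem freeHomEquiv_symm_unit_comp_map {a b : C} (u : a ⟶ b) :
    (R.freeHomEquiv a b).symm (R.η.app a ≫ R.map u) = R.free.map u := by
  have h : R.map (R.η.app a ≫ R.map u) ≫ R.μ.app b = R.map u := by
    rw [Functor.map_comp, Category.assoc, R.mu_naturality, ← Category.assoc, R.right_unit, id_comp]
  ext
  rw [freeHomEquiv_symm_apply_f]
  exact h

theorem freeHomEquiv_symm_comp {a b c : C} (p : a ⟶ R.obj b) (q : b ⟶ R.obj c) :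
    (R.freeHomEquiv a c).symm (p ≫ R.map q ≫ R.μ.app c) =
      (R.freeHomEquiv a b).symm p ≫ (R.freeHomEquiv b c).symm q := by
  have h : R.map (p ≫ R.map q ≫ R.μ.app c) ≫ R.μ.app c =
      (R.map p ≫ R.μ.app b) ≫ R.map q ≫ R.μ.app c := by
    simp only [Functor.map_comp, Category.assoc, R.assoc, R.mu_naturality_assoc]
  ext
  rw [Algebra.comp_f, freeHomEquiv_symm_apply_f, freeHomEquiv_symm_apply_f,
    freeHomEquiv_symm_apply_f]
  exact h

end Monad

namespace Adjunction

variable {L : Comonad C} {R : Monad C} (adj : L.toFunctor ⊣ R.toFunctor)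

theorem homEquiv_ε_comp (hη : R.η = conjugateEquiv (Adjunction.id (C := C)) adj L.ε)
    {a b : C} (u : a ⟶ b) : adj.homEquiv a b (L.ε.app a ≫ u) = R.η.app a ≫ R.map u := by
  have h := unit_conjugateEquiv (Adjunction.id (C := C)) adj L.ε a
  rw [← hη] at h
  simp only [Adjunction.id, homEquiv_unit, Functor.map_comp, NatTrans.id_app, Functor.id_obj,
    id_comp] at h ⊢
  rw [h, assoc]

theorem homEquiv_δ_comp (hμ : R.μ = conjugateEquiv (adj.comp adj) adj L.δ)
    {a c : C} (g : L.obj (L.obj a) ⟶ c) :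
    adj.homEquiv a c (L.δ.app a ≫ g) = (adj.comp adj).homEquiv a c g ≫ R.μ.app c := by
  have h := unit_conjugateEquiv (adj.comp adj) adj L.δ a
  rw [← hμ] at h
  rw [homEquiv_unit, homEquiv_unit, Functor.map_comp, ← reassoc_of% h, Category.assoc,
    Functor.comp_map, R.mu_naturality]
  rfl

def cofreeHomEquivFree (a b : C) :
    (L.cofree.obj a ⟶ L.cofree.obj b) ≃ (R.free.obj a ⟶ R.free.obj b) :=
  (L.cofreeHomEquiv a b).trans ((adj.homEquiv a b).trans (R.freeHomEquiv a b).symm)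

theorem cofreeHomEquivFree_map (hη : R.η = conjugateEquiv (Adjunction.id (C := C)) adj L.ε)
    {a b : C} (u : a ⟶ b) : adj.cofreeHomEquivFree a b (L.cofree.map u) = R.free.map u := by
  simp only [cofreeHomEquivFree, Equiv.trans_apply, L.cofreeHomEquiv_map,
    adj.homEquiv_ε_comp hη, R.freeHomEquiv_symm_unit_comp_map]

theorem cofreeHomEquivFree_comp (hμ : R.μ = conjugateEquiv (adj.comp adj) adj L.δ) {a b c : C}
    (f : L.cofree.obj a ⟶ L.cofree.obj b) (g : L.cofree.obj b ⟶ L.cofree.obj c) :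
    adj.cofreeHomEquivFree a c (f ≫ g) =
      adj.cofreeHomEquivFree a b f ≫ adj.cofreeHomEquivFree b c g := by
  simp only [cofreeHomEquivFree, Equiv.trans_apply]
  rw [L.cofreeHomEquiv_comp, adj.homEquiv_δ_comp hμ, comp_homEquiv, Equiv.trans_apply,
    homEquiv_naturality_left, homEquiv_naturality_right, assoc, R.freeHomEquiv_symm_comp]

end Adjunction

end CategoryTheory

/-- Let `L ⊣ R` with `L` a comonad whose mate monad structure is carried by `R` (`μ` the
conjugate of `δ`, `η` the conjugate of `ε`). Then the cofree coalgebra functor `F^L` is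
heavily separable iff the free algebra functor `F_R` is heavily separable. -/
theorem cofree_heavilySeparable_iff_free_heavilySeparable {C : Type u} [Category.{v} C]
    (L : Comonad C) (R : Monad C) (adj : L.toFunctor ⊣ R.toFunctor)
    (hμ : R.μ = conjugateEquiv (adj.comp adj) adj L.δ)
    (hη : R.η = conjugateEquiv (Adjunction.id (C := C)) adj L.ε) :
    HeavilySeparable L.cofree ↔ HeavilySeparable R.free :=
  heavilySeparable_iff_of_homEquiv adj.cofreeHomEquivFree
    (fun _ _ => adj.cofreeHomEquivFree_map hη) (fun _ _ _ => adj.cofreeHomEquivFree_comp hμ)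
end

section
/- Let L ⊣ R be an adjoint pair of endofunctors of a category C, with (L, Δ, ϵ) a comonad structure on L and (R, μ, ι) the corresponding monad structure on R obtained by taking mates (μ is the mate of Δ, ι is the mate of ϵ). Let P ⊣ Q be an adjunction of endofunctors of C whose associated comonad equals (L, Δ, ϵ) and whose associated monad equals (R, μ, ι). Then Q is heavily separable if and only if P is heavily separable. -/
/-!
Heavy separability of a functor only sees its action on hom-sets between objects of its image,
so it is invariant under natural isomorphism and under postcomposition with a fully faithful
functor. Up to such changes, `P` is the free functor into the Kleisli category of `R = P ⋙ Q`
and `Q` is the cofree functor into the co-Kleisli category of `L = Q ⋙ P`. Transposing along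
`L ⊣ R` identifies these two categories compatibly with the free functors; that this
identification is a functor is exactly the statement that `R` carries the mate monad structure.
-/

open CategoryTheory

universe v u

namespace CategoryTheory

section HeavilySeparable

variable {C : Type*} [Category C] {D : Type*} [Category D] {E : Type*} [Category E]

theorem _root_.HeavilySeparable.of_homMap_s18 {F : C ⥤ D} {G : C ⥤ E} (hF : HeavilySeparable F)
    (φ : ∀ {a b : C}, (G.obj a ⟶ G.obj b) → (F.obj a ⟶ F.obj b))
    (φ_map : ∀ {a b : C} (f : a ⟶ b), φ (G.map f) = F.map f)
    (φ_comp : ∀ {a b c : C} (f : G.obj a ⟶ G.obj b) (g : G.obj b ⟶ G.obj c),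
      φ (f ≫ g) = φ f ≫ φ g) :
    HeavilySeparable G := by
  obtain ⟨s, s_natural, s_map, s_comp⟩ := hF
  refine ⟨fun a b h => s a b (φ h), fun a' a b b' u v h => ?_, fun a b f => ?_,
    fun a b c f g => ?_⟩
  · simp only [φ_comp, φ_map, s_natural]
  · simp only [φ_map, s_map]
  · simp only [φ_comp, s_comp]

theorem _root_.heavilySeparable_iff_of_iso {F G : C ⥤ D} (e : F ≅ G) :
    HeavilySeparable F ↔ HeavilySeparable G := by
  suffices ∀ {F G : C ⥤ D}, (F ≅ G) → HeavilySeparable F → HeavilySeparable G from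
    ⟨this e, this e.symm⟩
  intro F G e hF
  exact hF.of_homMap_s18 (fun h => e.hom.app _ ≫ h ≫ e.inv.app _) (fun _ => by simp)
    (fun _ _ => by simp)

theorem Functor.FullyFaithful.heavilySeparable_comp_iff {K : D ⥤ E} (hK : K.FullyFaithful)
    (F : C ⥤ D) : HeavilySeparable (F ⋙ K) ↔ HeavilySeparable F :=
  ⟨fun h => h.of_homMap_s18 K.map (fun _ => rfl) K.map_comp,
    fun h => h.of_homMap_s18 hK.preimage (fun f => hK.preimage_map (F.map f)) hK.preimage_comp⟩

theorem Functor.FullyFaithful.heavilySeparable_iff_of_comp_iso {K : D ⥤ E}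
    (hK : K.FullyFaithful) {F : C ⥤ D} {G : C ⥤ E} (e : F ⋙ K ≅ G) :
    HeavilySeparable F ↔ HeavilySeparable G :=
  (hK.heavilySeparable_comp_iff F).symm.trans (heavilySeparable_iff_of_iso e)

end HeavilySeparable

namespace Adjunction

section Comparison

universe v₁ v₂ u₁ u₂

variable {C : Type u₁} [Category.{v₁} C] {D : Type u₂} [Category.{v₂} D] {F : C ⥤ D} {G : D ⥤ C}
  (adj : F ⊣ G)

def kleisliComparison : Kleisli adj.toMonad ⥤ D where
  obj X := F.obj X.of
  map f := (adj.homEquiv _ _).symm f.of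
  map_id X := adj.left_triangle_components X.of
  map_comp f g := by
    have hg : f.of ≫ adj.toMonad.map g.of ≫ adj.toMonad.μ.app _ =
        f.of ≫ G.map ((adj.homEquiv _ _).symm g.of) := congrArg (f.of ≫ ·) (G.map_comp _ _).symm
    exact (congrArg (adj.homEquiv _ _).symm hg).trans (adj.homEquiv_naturality_right_symm _ _)

def fullyFaithfulKleisliComparison : adj.kleisliComparison.FullyFaithful where
  preimage h := ⟨adj.homEquiv _ _ h⟩
  map_preimage h := (adj.homEquiv _ _).symm_apply_apply h
  preimage_map f := congrArg Kleisli.Hom.mk ((adj.homEquiv _ _).apply_symm_apply f.of)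

def toKleisliCompKleisliComparisonIso :
    Kleisli.Adjunction.toKleisli adj.toMonad ⋙ adj.kleisliComparison ≅ F :=
  NatIso.ofComponents (fun _ => Iso.refl _) fun {X Y} f => by
    change (adj.homEquiv X (F.obj Y)).symm (f ≫ adj.unit.app Y) ≫ 𝟙 _ = 𝟙 _ ≫ F.map f
    simp [homEquiv_counit]

theorem heavilySeparable_toKleisli_iff :
    HeavilySeparable (Kleisli.Adjunction.toKleisli adj.toMonad) ↔ HeavilySeparable F :=
  adj.fullyFaithfulKleisliComparison.heavilySeparable_iff_of_comp_iso
    adj.toKleisliCompKleisliComparisonIso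

def cokleisliComparison : Cokleisli adj.toComonad ⥤ C where
  obj X := G.obj X.of
  map f := adj.homEquiv _ _ f.of
  map_id X := adj.right_triangle_components X.of
  map_comp f g := by
    have hf : adj.toComonad.δ.app _ ≫ adj.toComonad.map f.of ≫ g.of =
        F.map (adj.homEquiv _ _ f.of) ≫ g.of := (F.map_comp_assoc _ _ _).symm
    exact (congrArg (adj.homEquiv _ _) hf).trans (adj.homEquiv_naturality_left _ _)

def fullyFaithfulCokleisliComparison : adj.cokleisliComparison.FullyFaithful where
  preimage h := ⟨(adj.homEquiv _ _).symm h⟩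
  map_preimage h := (adj.homEquiv _ _).apply_symm_apply h
  preimage_map f := congrArg Cokleisli.Hom.mk ((adj.homEquiv _ _).symm_apply_apply f.of)

def toCokleisliCompCokleisliComparisonIso :
    Cokleisli.Adjunction.toCokleisli adj.toComonad ⋙ adj.cokleisliComparison ≅ G :=
  NatIso.ofComponents (fun _ => Iso.refl _) fun {X Y} f => by
    change adj.homEquiv (G.obj X) Y (adj.counit.app X ≫ f) ≫ 𝟙 _ = 𝟙 _ ≫ G.map f
    simp [homEquiv_unit]

theorem heavilySeparable_toCokleisli_iff :
    HeavilySeparable (Cokleisli.Adjunction.toCokleisli adj.toComonad) ↔ HeavilySeparable G :=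
  adj.fullyFaithfulCokleisliComparison.heavilySeparable_iff_of_comp_iso
    adj.toCokleisliCompCokleisliComparisonIso

end Comparison

section Mate

variable {C : Type u} [Category.{v} C] {L : Comonad C} {R : Monad C}
  (adj : L.toFunctor ⊣ R.toFunctor)

theorem homEquiv_ε_app (hη : R.η = conjugateEquiv Adjunction.id adj L.ε) (X : C) :
    adj.homEquiv X _ (L.ε.app X) = R.η.app X := by
  simpa [← hη, homEquiv_unit] using (unit_conjugateEquiv Adjunction.id adj L.ε X).symm

theorem homEquiv_δ_app (hμ : R.μ = conjugateEquiv (adj.comp adj) adj L.δ) (X : C) :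
    adj.homEquiv X _ (L.δ.app X) =
      adj.unit.app X ≫ R.map (adj.unit.app (L.obj X)) ≫ R.μ.app _ := by
  simpa [← hμ, homEquiv_unit, comp_unit_app] using
    (unit_conjugateEquiv (adj.comp adj) adj L.δ X).symm

theorem homEquiv_cokleisliComp (hμ : R.μ = conjugateEquiv (adj.comp adj) adj L.δ) {X Y Z : C}
    (f : L.obj X ⟶ Y) (g : L.obj Y ⟶ Z) :
    adj.homEquiv X Z (L.δ.app X ≫ L.map f ≫ g) =
      adj.homEquiv X Y f ≫ R.map (adj.homEquiv Y Z g) ≫ R.μ.app Z := by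
  rw [homEquiv_naturality_right, homEquiv_δ_app adj hμ]
  simp only [homEquiv_unit, Functor.map_comp, Category.assoc, R.mu_naturality]
  rw [← R.mu_naturality_assoc, ← R.map_comp_assoc, adj.unit_naturality, R.map_comp_assoc]

def cokleisliToKleisli (hμ : R.μ = conjugateEquiv (adj.comp adj) adj L.δ)
    (hη : R.η = conjugateEquiv Adjunction.id adj L.ε) : Cokleisli L ⥤ Kleisli R where
  obj X := Kleisli.mk R X.of
  map f := ⟨adj.homEquiv _ _ f.of⟩
  map_id X := Kleisli.hom_ext (adj.homEquiv_ε_app hη X.of)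
  map_comp f g := Kleisli.hom_ext (adj.homEquiv_cokleisliComp hμ f.of g.of)

def fullyFaithfulCokleisliToKleisli (hμ : R.μ = conjugateEquiv (adj.comp adj) adj L.δ)
    (hη : R.η = conjugateEquiv Adjunction.id adj L.ε) :
    (adj.cokleisliToKleisli hμ hη).FullyFaithful where
  preimage h := ⟨(adj.homEquiv _ _).symm h.of⟩
  map_preimage h := Kleisli.hom_ext ((adj.homEquiv _ _).apply_symm_apply h.of)
  preimage_map f := Cokleisli.hom_ext _ ((adj.homEquiv _ _).symm_apply_apply f.of)

def toCokleisliCompCokleisliToKleisliIso (hμ : R.μ = conjugateEquiv (adj.comp adj) adj L.δ)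
    (hη : R.η = conjugateEquiv Adjunction.id adj L.ε) :
    Cokleisli.Adjunction.toCokleisli L ⋙ adj.cokleisliToKleisli hμ hη ≅
      Kleisli.Adjunction.toKleisli R :=
  NatIso.ofComponents (fun _ => Iso.refl _) fun f => by
    have h : adj.homEquiv _ _ (L.ε.app _ ≫ f) = f ≫ R.η.app _ := by
      rw [homEquiv_naturality_right, homEquiv_ε_app adj hη, R.unit_naturality]
    refine (Category.comp_id _).trans (Eq.trans ?_ (Category.id_comp _).symm)
    exact Kleisli.hom_ext h

theorem heavilySeparable_toCokleisli_iff_toKleisli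
    (hμ : R.μ = conjugateEquiv (adj.comp adj) adj L.δ)
    (hη : R.η = conjugateEquiv Adjunction.id adj L.ε) :
    HeavilySeparable (Cokleisli.Adjunction.toCokleisli L) ↔
      HeavilySeparable (Kleisli.Adjunction.toKleisli R) :=
  (adj.fullyFaithfulCokleisliToKleisli hμ hη).heavilySeparable_iff_of_comp_iso
    (adj.toCokleisliCompCokleisliToKleisliIso hμ hη)

end Mate

end Adjunction

end CategoryTheory

/-- Let `L ⊣ R` with `L` a comonad whose mate monad structure is carried by `R`. If `P ⊣ Q`
is an adjunction of endofunctors of `C` with associated comonad `L` and associated monad `R`,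
then `Q` is heavily separable iff `P` is heavily separable. -/
theorem rightAdjoint_heavilySeparable_iff_leftAdjoint_heavilySeparable
    {C : Type u} [Category.{v} C]
    (L : Comonad C) (R : Monad C) (adj : L.toFunctor ⊣ R.toFunctor)
    (hμ : R.μ = conjugateEquiv (adj.comp adj) adj L.δ)
    (hη : R.η = conjugateEquiv (Adjunction.id (C := C)) adj L.ε)
    (P Q : C ⥤ C) (adjPQ : P ⊣ Q)
    (hco : adjPQ.toComonad = L) (hmo : adjPQ.toMonad = R) :
    HeavilySeparable Q ↔ HeavilySeparable P := by
  subst hco hmo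
  rw [← adjPQ.heavilySeparable_toCokleisli_iff, ← adjPQ.heavilySeparable_toKleisli_iff]
  exact adj.heavilySeparable_toCokleisli_iff_toKleisli hμ hη
end
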